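/- arXiv:2604.03566 — 2 statements merged into one kernel-verified Lean document; each statement's English description precedes it below -/
import Mathlib

section
/- Let Σ₁, …, Σ_n be symmetric positive definite d×d real matrices and λ₁, …, λ_n real weights with Σ_{k=1}^n λ_k = 1. Then F attains its infimum over the closed cone of symmetric positive semidefinite d×d matrices: there exists a symmetric positive semidefinite matrix Ŝ with F(Ŝ) ≤ F(S) for every symmetric positive semidefinite S. -/
/-!
Expanding `W2sq` and using `∑ k, λ_k = 1`,
`F S = Tr S + ∑ λ_k Tr Σ_k - 2 ∑ λ_k Tr (S^{1/2} Σ_k S^{1/2})^{1/2}`.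
Each fidelity term is continuous on the positive semidefinite cone (continuity of the CFC square
root) and at most `√(d Tr Σ_k) √(Tr S)`: Cauchy–Schwarz gives `(Tr X)² ≤ d Tr (X²)` for
`X = (S^{1/2} Σ S^{1/2})^{1/2}`, and `Σ ≤ (Tr Σ) 1` gives `Tr (S^{1/2} Σ S^{1/2}) ≤ Tr Σ Tr S`.
Hence `F S ≥ F 0 + Tr S - K √(Tr S)`, so `F 0 ≤ F S` once `Tr S > K²`. Since `‖S‖ ≤ Tr S` on the
cone, this holds off a compact set, and the extreme value theorem on the closed cone gives a
minimiser.
-/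

open Matrix BigOperators Finset
open scoped Classical

/-- Unique positive semidefinite square root of a positive semidefinite matrix
(and junk value `0` on other matrices). -/
noncomputable def msqrt {d : ℕ} (M : Matrix (Fin d) (Fin d) ℝ) :
    Matrix (Fin d) (Fin d) ℝ :=
  if h : M.PosSemidef then
    (h.1.eigenvectorUnitary : Matrix (Fin d) (Fin d) ℝ) *
      diagonal ((↑) ∘ Real.sqrt ∘ h.1.eigenvalues) *
      (star h.1.eigenvectorUnitary : Matrix (Fin d) (Fin d) ℝ)
  else 0

/-- Smallest eigenvalue of a symmetric matrix (junk value `0` otherwise). -/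
noncomputable def lmin {d : ℕ} (M : Matrix (Fin d) (Fin d) ℝ) : ℝ :=
  if h : M.IsHermitian then ⨅ i, h.eigenvalues i else 0

/-- Largest eigenvalue of a symmetric matrix (junk value `0` otherwise). -/
noncomputable def lmax {d : ℕ} (M : Matrix (Fin d) (Fin d) ℝ) : ℝ :=
  if h : M.IsHermitian then ⨆ i, h.eigenvalues i else 0

/-- Squared Bures–Wasserstein distance. -/
noncomputable def W2sq {d : ℕ} (A B : Matrix (Fin d) (Fin d) ℝ) : ℝ :=
  A.trace + B.trace - 2 * (msqrt (msqrt A * B * msqrt A)).trace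

/-- The conditional barycenter objective `F`. -/
noncomputable def Fobj {d n : ℕ} (Sig : Fin n → Matrix (Fin d) (Fin d) ℝ)
    (lam : Fin n → ℝ) (S : Matrix (Fin d) (Fin d) ℝ) : ℝ :=
  ∑ k, lam k * W2sq S (Sig k)

/-- Geometric mean `GM(S⁻¹, Σ) = S^{-1/2} (S^{1/2} Σ S^{1/2})^{1/2} S^{-1/2}`. -/
noncomputable def GMinv {d : ℕ} (S Sigma : Matrix (Fin d) (Fin d) ℝ) :
    Matrix (Fin d) (Fin d) ℝ :=
  (msqrt S)⁻¹ * msqrt (msqrt S * Sigma * msqrt S) * (msqrt S)⁻¹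

/-- The Spectral Dominance of Positive Weights condition. -/
def SDPW {d n : ℕ} (Sig : Fin n → Matrix (Fin d) (Fin d) ℝ) (lam : Fin n → ℝ) : Prop :=
  ∑ j ∈ Finset.univ.filter (fun k => lam k < 0), (-lam j) * Real.sqrt (lmax (Sig j))
    < ∑ i ∈ Finset.univ.filter (fun k => 0 < lam k), lam i * Real.sqrt (lmin (Sig i))

section

open scoped MatrixOrder Matrix.Norms.L2Operator

namespace Matrix

variable {m : Type*} [Fintype m]

lemma isClosed_setOf_posSemidef : IsClosed {S : Matrix m m ℝ | S.PosSemidef} := by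
  simp_rw [posSemidef_iff_dotProduct_mulVec, Set.ofPred_and, Set.ofPred_forall]
  exact (isClosed_eq (by fun_prop) (by fun_prop)).inter
    (isClosed_iInter fun x => isClosed_le (by fun_prop) (by fun_prop))

lemma PosSemidef.spectrum_subset_Icc_trace [DecidableEq m] {S : Matrix m m ℝ}
    (hS : S.PosSemidef) : spectrum ℝ S ⊆ Set.Icc 0 S.trace := by
  rw [hS.1.spectrum_real_eq_range_eigenvalues]
  rintro _ ⟨i, rfl⟩
  refine ⟨hS.eigenvalues_nonneg i, ?_⟩
  rw [hS.1.trace_eq_sum_eigenvalues]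
  exact Finset.single_le_sum (fun j _ => hS.eigenvalues_nonneg j) (Finset.mem_univ i)

lemma PosSemidef.le_algebraMap_trace [DecidableEq m] {S : Matrix m m ℝ} (hS : S.PosSemidef) :
    S ≤ algebraMap ℝ (Matrix m m ℝ) S.trace :=
  le_algebraMap_of_spectrum_le (fun _ hx => (hS.spectrum_subset_Icc_trace hx).2) hS.1.isSelfAdjoint

lemma PosSemidef.norm_le_trace {S : Matrix m m ℝ} (hS : S.PosSemidef) : ‖S‖ ≤ S.trace := by
  classical
  nth_rw 1 [← cfc_id' ℝ S hS.1.isSelfAdjoint]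
  refine norm_cfc_le hS.trace_nonneg fun x hx => ?_
  obtain ⟨hx0, hxS⟩ := hS.spectrum_subset_Icc_trace hx
  rwa [Real.norm_of_nonneg hx0]

lemma trace_star_mul_mul_le {A : Matrix m m ℝ} (hA : A.PosSemidef) (C : Matrix m m ℝ) :
    (star C * A * C).trace ≤ A.trace * (star C * C).trace := by
  classical
  calc (star C * A * C).trace ≤ (star C * algebraMap ℝ (Matrix m m ℝ) A.trace * C).trace :=
        (tracePositiveLinearMap m ℝ ℝ).monotone'
          (star_left_conjugate_le_conjugate hA.le_algebraMap_trace C)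
    _ = A.trace * (star C * C).trace := by
        rw [Algebra.algebraMap_eq_smul_one, mul_smul_comm, mul_one, smul_mul_assoc, trace_smul,
          smul_eq_mul]

lemma sq_trace_le_card_mul_trace_transpose_mul_self (X : Matrix m m ℝ) :
    X.trace ^ 2 ≤ Fintype.card m * (Xᵀ * X).trace := by
  calc X.trace ^ 2 ≤ Fintype.card m * ∑ i, X i i ^ 2 := sq_sum_le_card_mul_sum_sq
    _ ≤ Fintype.card m * (Xᵀ * X).trace := by
        gcongr
        simp only [trace, diag, mul_apply, transpose_apply, ← sq]
        exact Finset.sum_le_sum fun i _ =>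
          Finset.single_le_sum (f := fun j => X j i ^ 2) (fun j _ => sq_nonneg _) (Finset.mem_univ i)

lemma exists_isMinOn_posSemidef {f : Matrix m m ℝ → ℝ} (hf : ContinuousOn f {S | S.PosSemidef})
    {R : ℝ} (hR : ∀ S : Matrix m m ℝ, S.PosSemidef → R < S.trace → f 0 ≤ f S) :
    ∃ S ∈ {S : Matrix m m ℝ | S.PosSemidef}, IsMinOn f {S | S.PosSemidef} S := by
  refine hf.exists_isMinOn' isClosed_setOf_posSemidef PosSemidef.zero ?_
  filter_upwards [(tendsto_norm_cocompact_atTop.eventually_gt_atTop R).filter_mono inf_le_left,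
    Filter.mem_inf_of_right (Filter.mem_principal_self _)] with S hnorm hS
  exact hR S hS (hnorm.trans_le hS.norm_le_trace)

end Matrix

variable {d : ℕ}

lemma msqrt_eq_sqrt {M : Matrix (Fin d) (Fin d) ℝ} (hM : M.PosSemidef) : msqrt M = CFC.sqrt M := by
  rw [CFC.sqrt_eq_real_sqrt M hM.nonneg, cfcₙ_eq_cfc, msqrt, dif_pos hM, hM.1.cfc_eq,
    IsHermitian.cfc, Unitary.conjStarAlgAut_apply]
  rfl

lemma posSemidef_msqrt {M : Matrix (Fin d) (Fin d) ℝ} (hM : M.PosSemidef) :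
    (msqrt M).PosSemidef := by
  rw [msqrt_eq_sqrt hM]
  exact (CFC.sqrt_nonneg M).posSemidef

lemma msqrt_mul_msqrt {M : Matrix (Fin d) (Fin d) ℝ} (hM : M.PosSemidef) :
    msqrt M * msqrt M = M := by
  rw [msqrt_eq_sqrt hM, CFC.sqrt_mul_sqrt_self M hM.nonneg]

lemma trace_msqrt_le {M : Matrix (Fin d) (Fin d) ℝ} (hM : M.PosSemidef) :
    (msqrt M).trace ≤ √(d * M.trace) := by
  have h := sq_trace_le_card_mul_trace_transpose_mul_self (msqrt M)
  rw [← conjTranspose_eq_transpose_of_trivial, (posSemidef_msqrt hM).1.eq, msqrt_mul_msqrt hM,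
    Fintype.card_fin] at h
  exact (le_abs_self _).trans (Real.abs_le_sqrt h)

noncomputable def fidelity (S Sigma : Matrix (Fin d) (Fin d) ℝ) : ℝ :=
  (msqrt (msqrt S * Sigma * msqrt S)).trace

lemma W2sq_eq_sub_fidelity (S Sigma : Matrix (Fin d) (Fin d) ℝ) :
    W2sq S Sigma = S.trace + Sigma.trace - 2 * fidelity S Sigma :=
  rfl

lemma posSemidef_msqrt_mul_mul_msqrt {S Sigma : Matrix (Fin d) (Fin d) ℝ} (hS : S.PosSemidef)
    (hSigma : Sigma.PosSemidef) : (msqrt S * Sigma * msqrt S).PosSemidef := by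
  simpa only [(posSemidef_msqrt hS).1.eq] using hSigma.conjTranspose_mul_mul_same (msqrt S)

lemma fidelity_nonneg {S Sigma : Matrix (Fin d) (Fin d) ℝ} (hS : S.PosSemidef)
    (hSigma : Sigma.PosSemidef) : 0 ≤ fidelity S Sigma :=
  (posSemidef_msqrt (posSemidef_msqrt_mul_mul_msqrt hS hSigma)).trace_nonneg

lemma fidelity_zero_left (Sigma : Matrix (Fin d) (Fin d) ℝ) : fidelity 0 Sigma = 0 := by
  simp [fidelity, msqrt_eq_sqrt PosSemidef.zero]

lemma fidelity_le {S Sigma : Matrix (Fin d) (Fin d) ℝ} (hS : S.PosSemidef)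
    (hSigma : Sigma.PosSemidef) : fidelity S Sigma ≤ √(d * Sigma.trace) * √S.trace := by
  have hconj := trace_star_mul_mul_le hSigma (msqrt S)
  rw [star_eq_conjTranspose, (posSemidef_msqrt hS).1.eq, msqrt_mul_msqrt hS] at hconj
  calc fidelity S Sigma ≤ √(d * (msqrt S * Sigma * msqrt S).trace) :=
        trace_msqrt_le (posSemidef_msqrt_mul_mul_msqrt hS hSigma)
    _ ≤ √(d * (Sigma.trace * S.trace)) := by gcongr
    _ = √(d * Sigma.trace) * √S.trace := by
        rw [← mul_assoc, Real.sqrt_mul (mul_nonneg d.cast_nonneg hSigma.trace_nonneg)]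

lemma continuousOn_fidelity {Sigma : Matrix (Fin d) (Fin d) ℝ} (hSigma : Sigma.PosSemidef) :
    ContinuousOn (fidelity · Sigma) {S | S.PosSemidef} := by
  have hsqrt : ContinuousOn CFC.sqrt {S : Matrix (Fin d) (Fin d) ℝ | S.PosSemidef} := by
    simpa only [nonneg_iff_posSemidef] using CFC.continuousOn_sqrt (A := Matrix (Fin d) (Fin d) ℝ)
  refine ContinuousOn.congr (f := fun S => (CFC.sqrt (CFC.sqrt S * Sigma * CFC.sqrt S)).trace)
    ?_ fun S hS => ?_
  · refine (continuous_id (X := Matrix (Fin d) (Fin d) ℝ)).matrix_trace.comp_continuousOn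
      (hsqrt.comp ?_ fun S hS => ?_)
    · exact (hsqrt.mul continuousOn_const).mul hsqrt
    · rw [← msqrt_eq_sqrt hS]
      exact posSemidef_msqrt_mul_mul_msqrt hS hSigma
  · have hM := posSemidef_msqrt_mul_mul_msqrt hS hSigma
    rw [fidelity, msqrt_eq_sqrt hM, msqrt_eq_sqrt hS]

variable {n : ℕ} {Sig : Fin n → Matrix (Fin d) (Fin d) ℝ} {lam : Fin n → ℝ}

lemma Fobj_eq (hsum : ∑ k, lam k = 1) (S : Matrix (Fin d) (Fin d) ℝ) :
    Fobj Sig lam S =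
      S.trace + ∑ k, lam k * (Sig k).trace - 2 * ∑ k, lam k * fidelity S (Sig k) := by
  simp only [Fobj, W2sq_eq_sub_fidelity, mul_sub, mul_add, Finset.sum_sub_distrib,
    Finset.sum_add_distrib, ← Finset.sum_mul, hsum, one_mul, Finset.mul_sum, mul_left_comm]

lemma Fobj_zero (hsum : ∑ k, lam k = 1) : Fobj Sig lam 0 = ∑ k, lam k * (Sig k).trace := by
  simp [Fobj_eq hsum, fidelity_zero_left]

lemma continuousOn_Fobj (hSig : ∀ k, (Sig k).PosSemidef) :
    ContinuousOn (Fobj Sig lam) {S | S.PosSemidef} := by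
  show ContinuousOn (fun S => ∑ k, lam k * W2sq S (Sig k)) _
  simp only [W2sq_eq_sub_fidelity]
  refine continuousOn_finsetSum _ fun k _ => continuousOn_const.mul ?_
  exact ((continuous_id.matrix_trace.continuousOn).add continuousOn_const).sub
    (continuousOn_const.mul (continuousOn_fidelity (hSig k)))

lemma exists_Fobj_zero_le_of_trace_gt (hSig : ∀ k, (Sig k).PosSemidef) (hsum : ∑ k, lam k = 1) :
    ∃ R, ∀ S : Matrix (Fin d) (Fin d) ℝ, S.PosSemidef → R < S.trace →
      Fobj Sig lam 0 ≤ Fobj Sig lam S := by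
  set K := 2 * ∑ k, |lam k| * √(d * (Sig k).trace)
  refine ⟨K ^ 2, fun S hS hKS => ?_⟩
  have hfid : 2 * ∑ k, lam k * fidelity S (Sig k) ≤ K * √S.trace := by
    rw [mul_assoc, Finset.sum_mul]
    gcongr 2 * ?_
    refine Finset.sum_le_sum fun k _ => ?_
    calc lam k * fidelity S (Sig k) ≤ |lam k| * fidelity S (Sig k) :=
          mul_le_mul_of_nonneg_right (le_abs_self _) (fidelity_nonneg hS (hSig k))
      _ ≤ |lam k| * (√(d * (Sig k).trace) * √S.trace) := by grw [fidelity_le hS (hSig k)]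
      _ = |lam k| * √(d * (Sig k).trace) * √S.trace := by ring
  have hK : K * √S.trace ≤ S.trace :=
    calc K * √S.trace ≤ √S.trace * √S.trace := by
          grw [(le_abs_self K).trans (Real.abs_le_sqrt hKS.le)]
      _ = S.trace := Real.mul_self_sqrt hS.trace_nonneg
  rw [Fobj_zero hsum, Fobj_eq hsum S]
  linarith

end

/-- `F` attains its infimum on the closed positive semidefinite cone. -/
theorem stmt4 {d n : ℕ} (Sig : Fin n → Matrix (Fin d) (Fin d) ℝ)
    (lam : Fin n → ℝ) (hSig : ∀ k, (Sig k).PosDef) (hsum : ∑ k, lam k = 1) :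
    ∃ Shat : Matrix (Fin d) (Fin d) ℝ, Shat.PosSemidef ∧
      ∀ S : Matrix (Fin d) (Fin d) ℝ, S.PosSemidef → Fobj Sig lam Shat ≤ Fobj Sig lam S := by
  have hSig' : ∀ k, (Sig k).PosSemidef := fun k => (hSig k).posSemidef
  obtain ⟨R, hR⟩ := exists_Fobj_zero_le_of_trace_gt hSig' hsum
  obtain ⟨Shat, hShat, hmin⟩ := exists_isMinOn_posSemidef (continuousOn_Fobj hSig') hR
  exact ⟨Shat, hShat, fun S hS => hmin hS⟩
end

section
/- Let Σ₁, …, Σ_n be symmetric positive definite d×d real matrices and λ₁, …, λ_n real weights with Σ_{k=1}^n λ_k = 1, and suppose a symmetric positive definite matrix S* satisfies the stationarity equation S* = Σ_{k=1}^n λ_k (S*^{1/2} Σ_k S*^{1/2})^{1/2}. Then for every t > 0, F(t·S*) = Σ_{k=1}^n λ_k Tr(Σ_k) + (t − 2√t)·Tr(S*). -/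
open Matrix BigOperators Finset
open scoped Classical

/-! Scaling `S` by `t` scales `S^{1/2}` by `√t`, so
`W₂²(t S, Σ) = t Tr S + Tr Σ − 2 √t Tr (S^{1/2} Σ S^{1/2})^{1/2}`. Taking traces in the
stationarity equation identifies `∑ λₖ Tr (S*^{1/2} Σₖ S*^{1/2})^{1/2}` with `Tr S*`, and
`∑ λₖ = 1` turns the `t`-part into `t Tr S*`. -/

section Msqrt

variable {d : ℕ}

lemma msqrt_eq_cfc {M : Matrix (Fin d) (Fin d) ℝ} (hM : M.PosSemidef) :
    msqrt M = cfc Real.sqrt M := by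
  rw [hM.1.cfc_eq, msqrt, dif_pos hM]
  rfl

lemma isHermitian_msqrt {M : Matrix (Fin d) (Fin d) ℝ} (hM : M.PosSemidef) :
    (msqrt M).IsHermitian := by
  rw [msqrt_eq_cfc hM]
  exact cfc_predicate (p := IsSelfAdjoint) Real.sqrt M

lemma msqrt_smul {M : Matrix (Fin d) (Fin d) ℝ} (hM : M.PosSemidef) {c : ℝ} (hc : 0 ≤ c) :
    msqrt (c • M) = Real.sqrt c • msqrt M := by
  have hMsa : IsSelfAdjoint M := hM.1
  rw [msqrt_eq_cfc (hM.smul hc), msqrt_eq_cfc hM, ← cfc_comp_const_mul c Real.sqrt M]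
  simp_rw [Real.sqrt_mul hc]
  exact cfc_const_mul (Real.sqrt c) Real.sqrt M

lemma Matrix.PosSemidef.msqrt_mul_mul_msqrt {A B : Matrix (Fin d) (Fin d) ℝ} (hA : A.PosSemidef)
    (hB : B.PosSemidef) : (msqrt A * B * msqrt A).PosSemidef := by
  simpa only [(isHermitian_msqrt hA).eq] using hB.mul_mul_conjTranspose_same (msqrt A)

lemma W2sq_smul_left {A B : Matrix (Fin d) (Fin d) ℝ} (hA : A.PosSemidef) (hB : B.PosSemidef)
    {c : ℝ} (hc : 0 ≤ c) :
    W2sq (c • A) B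
      = c * A.trace + B.trace - 2 * Real.sqrt c * (msqrt (msqrt A * B * msqrt A)).trace := by
  have hconj : (Real.sqrt c • msqrt A) * B * (Real.sqrt c • msqrt A)
      = c • (msqrt A * B * msqrt A) := by
    rw [smul_mul_assoc, smul_mul_assoc, mul_smul_comm, smul_smul, Real.mul_self_sqrt hc]
  rw [W2sq, msqrt_smul hA hc, hconj, msqrt_smul (hA.msqrt_mul_mul_msqrt hB) hc,
    trace_smul, trace_smul, smul_eq_mul, smul_eq_mul]
  ring

end Msqrt

/-- along the ray through a stationary point,
`F(t S*) = ∑ λₖ Tr Σₖ + (t − 2√t) Tr S*`. -/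
theorem stmt9 {d n : ℕ} (Sig : Fin n → Matrix (Fin d) (Fin d) ℝ)
    (lam : Fin n → ℝ) (hSig : ∀ k, (Sig k).PosDef) (hsum : ∑ k, lam k = 1)
    (Sstar : Matrix (Fin d) (Fin d) ℝ) (hSstar : Sstar.PosDef)
    (hstat : Sstar = ∑ k, lam k • msqrt (msqrt Sstar * Sig k * msqrt Sstar))
    (t : ℝ) (ht : 0 < t) :
    Fobj Sig lam (t • Sstar)
      = (∑ k, lam k * (Sig k).trace) + (t - 2 * Real.sqrt t) * Sstar.trace := by
  set G : Fin n → ℝ := fun k => (msqrt (msqrt Sstar * Sig k * msqrt Sstar)).trace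
  have htrace : Sstar.trace = ∑ k, lam k * G k := by
    conv_lhs => rw [hstat]
    simp only [trace_sum, trace_smul, smul_eq_mul, G]
  calc Fobj Sig lam (t • Sstar)
      = ∑ k, lam k * (t * Sstar.trace + (Sig k).trace - 2 * Real.sqrt t * G k) := by
        simp only [Fobj, W2sq_smul_left hSstar.posSemidef (hSig _).posSemidef ht.le, G]
    _ = (∑ k, lam k) * t * Sstar.trace + (∑ k, lam k * (Sig k).trace)
          - 2 * Real.sqrt t * ∑ k, lam k * G k := by
        simp only [Finset.sum_mul, Finset.mul_sum, ← Finset.sum_add_distrib,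
          ← Finset.sum_sub_distrib]
        exact Finset.sum_congr rfl fun k _ => by ring
    _ = _ := by rw [hsum, ← htrace]; ring
end
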